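/- Fix 0 < φ < φ* and let G : ℝ → ℝ be continuous with |G(λ)| ≤ C₁ + C₂·λ for all λ ≥ 0, where C₁, C₂ ≥ 0 are constants such that e^{q·C₂}·φ < φ* for some q > 1. Define the log-moment generating function Λ(θ) := log( Z(e^θ · φ) / Z(φ) ) for θ ∈ ℝ (with Λ(θ) := +∞ when e^θ·φ ≥ φ*) and the rate function J(λ) := sup_{θ∈ℝ} ( θ·λ − Λ(θ) ). Then limsup_{m→∞} (1/m) · log ∫ exp( m · G( (ω_1 + ⋯ + ω_m)/m ) ) d(P_φ)^{⊗m}(ω) ≤ sup_{λ≥0} ( G(λ) − J(λ) ). -/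

import Mathlib

open scoped ENNReal BigOperators

/-- `g(k)! = ∏_{i=1}^k g(i)`, with `g(0)! = 1`. -/
noncomputable def gfact (g : ℕ → ℝ) (k : ℕ) : ℝ := ∏ i ∈ Finset.Icc 1 k, g i

/-- The partition function `Z(s) = Σ_{k≥0} s^k / g(k)!`. -/
noncomputable def Zfun (g : ℕ → ℝ) (s : ℝ) : ℝ := ∑' k : ℕ, s ^ k / gfact g k

/-- `φstar` is the radius of convergence of the power series `Z`. -/
def IsConvRadius (g : ℕ → ℝ) (φstar : ℝ≥0∞) : Prop :=
  (∀ s : ℝ, 0 ≤ s → ENNReal.ofReal s < φstar →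
      Summable (fun k : ℕ => s ^ k / gfact g k)) ∧
  (∀ s : ℝ, 0 ≤ s → Summable (fun k : ℕ => s ^ k / gfact g k) →
      ENNReal.ofReal s ≤ φstar)

/-- The one-site zero range weight `P_φ({k}) = φ^k / (Z(φ) g(k)!)`. -/
noncomputable def Pzr (g : ℕ → ℝ) (φ : ℝ) (k : ℕ) : ℝ := φ ^ k / (Zfun g φ * gfact g k)

open MeasureTheory

/-- The one-site zero range measure `P_φ` on `ℕ`. -/
noncomputable def Pmeas (g : ℕ → ℝ) (φ : ℝ) : Measure ℕ :=
  Measure.count.withDensity (fun k => ENNReal.ofReal (Pzr g φ k))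

open Classical in
/-- The log-moment generating function `Λ(θ) = log(Z(e^θ φ)/Z(φ))`, set to `+∞`
when `e^θ φ ≥ φ*`. -/
noncomputable def LambdaFn (g : ℕ → ℝ) (φstar : ℝ≥0∞) (φ θ : ℝ) : EReal :=
  if ENNReal.ofReal (Real.exp θ * φ) < φstar then
    ((Real.log (Zfun g (Real.exp θ * φ) / Zfun g φ) : ℝ) : EReal)
  else ⊤

/-- The large deviations rate function `J(λ) = sup_θ (θλ − Λ(θ))`. -/
noncomputable def Jrate (g : ℕ → ℝ) (φstar : ℝ≥0∞) (φ lam : ℝ) : EReal :=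
  ⨆ θ : ℝ, (((θ * lam : ℝ) : EReal) - LambdaFn g φstar φ θ)

/-!
Exponential Chebyshev bounds with tilts `θ ≥ 0` and `θ ≤ 0` give
`P(mean ∈ [a, b]) ≤ exp (-m c)` for `c < max (J⁺ a) (J⁻ b)`, where `J⁺ = JrateOn (Ici 0)`
and `J⁻ = JrateOn (Iic 0)` are the Legendre transforms of `Λ` over the nonnegative and the
nonpositive tilts. Both are lower semicontinuous, and since `Λ` is convex with `Λ 0 = 0`
they are never positive at the same point, so by connectedness of `[a, b]` some
`λ ∈ [a, b]` has `J λ ≤ max (J⁺ a) (J⁻ b)`: this is Cramér's upper bound on closed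
intervals. Cutting `[0, L]` into finitely many intervals on which `G` oscillates by at most
`ε`, each of them contributes at most `exp (m (sup (G - J) + 3 ε))`. On `{mean ≥ L}` the
linear growth of `G` is beaten by a tilt `θ > C₂` with `Λ θ < ∞` once `L` is large. The
number of pieces does not depend on `m`, so it disappears after `(1/m) log`.
-/

open MeasureTheory ProbabilityTheory Real Filter Set Topology

lemma lintegral_pi_prod_eq_pow {ι α : Type*} [Fintype ι] [MeasurableSpace α] (P : Measure α)
    [IsProbabilityMeasure P] {f : α → ℝ≥0∞} (hf : Measurable f) :
    ∫⁻ ω, ∏ i, f (ω i) ∂Measure.pi (fun _ : ι => P) =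
      (∫⁻ a, f a ∂P) ^ Fintype.card ι := by
  calc _ = ∏ i, ∫⁻ ω, f (ω i) ∂Measure.pi (fun _ : ι => P) :=
        lintegral_prod_eq_prod_lintegral_of_indepFun Finset.univ
          (fun i (ω : ι → α) => f (ω i)) (iIndepFun_pi fun _ => hf.aemeasurable)
          fun i => hf.comp (measurable_pi_apply i)
    _ = _ := by
        simp_rw [(measurePreserving_eval (fun _ : ι => P) _).lintegral_comp hf]
        rw [Finset.prod_const, Finset.card_univ]

lemma lintegral_le_sum_setLIntegral_Icc_add {α : Type*} [MeasurableSpace α] (μ : Measure α)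
    {X : α → ℝ} (hX : ∀ a, 0 ≤ X a) (f : α → ℝ≥0∞) {δ : ℝ} (hδ : 0 < δ)
    (N : ℕ) :
    ∫⁻ a, f a ∂μ ≤
      ∑ j : Fin N, ∫⁻ a in {a | X a ∈ Icc (j * δ) ((j + 1) * δ)}, f a ∂μ +
        ∫⁻ a in {a | N * δ ≤ X a}, f a ∂μ := by
  have hcover : univ ⊆ (⋃ j : Fin N, {a | X a ∈ Icc (j * δ) ((j + 1) * δ)}) ∪
      {a | N * δ ≤ X a} := by
    intro a _
    by_cases h : N * δ ≤ X a
    · exact Or.inr h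
    have hXδ : 0 ≤ X a / δ := div_nonneg (hX a) hδ.le
    have hlt : ⌊X a / δ⌋₊ < N := (Nat.floor_lt hXδ).2 ((div_lt_iff₀ hδ).2 (not_le.1 h))
    exact Or.inl (mem_iUnion.2 ⟨⟨_, hlt⟩, (le_div_iff₀ hδ).1 (Nat.floor_le hXδ),
      (div_le_iff₀ hδ).1 (Nat.lt_floor_add_one _).le⟩)
  calc ∫⁻ a, f a ∂μ = ∫⁻ a in univ, f a ∂μ := (setLIntegral_univ f).symm
    _ ≤ _ := lintegral_mono_set hcover
    _ ≤ _ := lintegral_union_le _ _ _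
    _ ≤ _ := by
        gcongr
        exact (lintegral_iUnion_le _ _).trans_eq (tsum_fintype _)

lemma exists_grid_abs_sub_le {G : ℝ → ℝ} (hG : Continuous G) (L : ℝ) {ε : ℝ}
    (hε : 0 < ε) :
    ∃ δ > 0, ∃ N : ℕ, L ≤ N * δ ∧
      ∀ j < N, ∀ x ∈ Icc (j * δ) ((j + 1) * δ), |G x - G (j * δ)| ≤ ε := by
  obtain ⟨δ, hδ, hGδ⟩ := Metric.uniformContinuousOn_iff.1
    ((isCompact_Icc (a := 0) (b := L + 1)).uniformContinuousOn_of_continuous hG.continuousOn)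
    ε hε
  set δ' := min δ 1 / 2 with hδ'_def
  have hδ'δ : δ' < δ := by linarith [min_le_left δ 1]
  have hδ'1 : δ' ≤ 1 := by linarith [min_le_right δ 1]
  have hδ' : 0 < δ' := by positivity
  refine ⟨δ', hδ', ⌈L / δ'⌉₊, (div_le_iff₀ hδ').1 (Nat.le_ceil _),
    fun j hj x hx => ?_⟩
  have hjL : j * δ' < L := (lt_div_iff₀ hδ').1 (Nat.lt_ceil.1 hj)
  have hj0 : 0 ≤ j * δ' := by positivity
  refine (hGδ x ⟨hj0.trans hx.1, by linarith [hx.2]⟩ (j * δ') ⟨hj0, by linarith⟩ ?_).le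
  rw [Real.dist_eq, abs_lt]
  constructor <;> linarith [hx.1, hx.2]

lemma log_integral_exp_le {α : Type*} [MeasurableSpace α] {μ : Measure α} [NeZero μ]
    {f : α → ℝ} (hf : AEStronglyMeasurable (fun a => exp (f a)) μ) {B : ℝ} (hB : 0 ≤ B)
    (h : ∫⁻ a, ENNReal.ofReal (exp (f a)) ∂μ ≤ ENNReal.ofReal B) :
    Real.log (∫ a, exp (f a) ∂μ) ≤ Real.log B := by
  have hexp : 0 ≤ᵐ[μ] fun a => exp (f a) := ae_of_all _ fun a => (exp_pos _).le
  have hint : Integrable (fun a => exp (f a)) μ :=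
    ⟨hf, (hasFiniteIntegral_iff_ofReal hexp).2 (h.trans_lt ENNReal.ofReal_lt_top)⟩
  refine log_le_log (integral_exp_pos hint) ?_
  rw [integral_eq_lintegral_of_nonneg_ae hexp hf]
  exact ENNReal.toReal_le_of_le_ofReal hB h

lemma limsup_inv_mul_le {u : ℕ → ℝ} {K c : ℝ} (hu : ∀ m, u m ≤ K + m * c) :
    limsup (fun m : ℕ => (((1 / m : ℝ) * u m : ℝ) : EReal)) atTop ≤ c := by
  have hlim : Tendsto (fun m : ℕ => (((1 / m : ℝ) * K + c : ℝ) : EReal)) atTop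
      (𝓝 (c : EReal)) :=
    EReal.tendsto_coe.2 <| by
      simpa using (tendsto_one_div_atTop_nhds_zero_nat.mul_const K).add_const c
  refine (limsup_le_limsup ((eventually_ge_atTop 1).mono fun m hm => ?_)).trans
    hlim.limsup_eq.le
  have hm0 : (0 : ℝ) < m := by exact_mod_cast hm
  refine EReal.coe_le_coe_iff.2 ?_
  calc (1 / m : ℝ) * u m ≤ (1 / m) * (K + m * c) := by gcongr; exact hu m
    _ = (1 / m) * K + c := by field_simp

section ZeroRange

variable {g : ℕ → ℝ} {φstar : ℝ≥0∞} {φ : ℝ}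

lemma gfact_pos (hgpos : ∀ k : ℕ, 1 ≤ k → 0 < g k) (k : ℕ) : 0 < gfact g k :=
  Finset.prod_pos fun i hi => hgpos i (Finset.mem_Icc.mp hi).1

lemma one_le_Zfun (hgpos : ∀ k : ℕ, 1 ≤ k → 0 < g k) {s : ℝ} (hs : 0 ≤ s)
    (hsum : Summable fun k : ℕ => s ^ k / gfact g k) : 1 ≤ Zfun g s := by
  calc (1 : ℝ) = s ^ 0 / gfact g 0 := by simp [gfact]
    _ ≤ Zfun g s := hsum.le_tsum 0 fun k _ => div_nonneg (pow_nonneg hs k) (gfact_pos hgpos k).le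

lemma Zfun_pos (hgpos : ∀ k : ℕ, 1 ≤ k → 0 < g k) {s : ℝ} (hs : 0 ≤ s)
    (hsum : Summable fun k : ℕ => s ^ k / gfact g k) : 0 < Zfun g s :=
  one_pos.trans_le (one_le_Zfun hgpos hs hsum)

variable (g φ) in
noncomputable def logMGF (θ : ℝ) : ℝ := Real.log (Zfun g (exp θ * φ) / Zfun g φ)

lemma LambdaFn_of_lt {θ : ℝ} (hθ : ENNReal.ofReal (exp θ * φ) < φstar) :
    LambdaFn g φstar φ θ = logMGF g φ θ := if_pos hθ

lemma LambdaFn_of_not_lt {θ : ℝ} (hθ : ¬ ENNReal.ofReal (exp θ * φ) < φstar) :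
    LambdaFn g φstar φ θ = ⊤ := if_neg hθ

lemma logMGF_zero (hgpos : ∀ k : ℕ, 1 ≤ k → 0 < g k) (hφ0 : 0 ≤ φ)
    (hsum : Summable fun k : ℕ => φ ^ k / gfact g k) : logMGF g φ 0 = 0 := by
  rw [logMGF, exp_zero, one_mul, div_self (Zfun_pos hgpos hφ0 hsum).ne', Real.log_one]

lemma exists_gt_ofReal_exp_mul_lt {x : ℝ} (hx : ENNReal.ofReal (exp x * φ) < φstar) :
    ∃ θ, x < θ ∧ ENNReal.ofReal (exp θ * φ) < φstar := by
  have hopen : IsOpen {θ : ℝ | ENNReal.ofReal (exp θ * φ) < φstar} :=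
    isOpen_lt (ENNReal.continuous_ofReal.comp (by fun_prop)) continuous_const
  exact ((frequently_gt_nhds x).and_eventually (hopen.mem_nhds hx)).exists

lemma lintegral_Pmeas (f : ℕ → ℝ≥0∞) :
    ∫⁻ k, f k ∂Pmeas g φ = ∑' k, ENNReal.ofReal (Pzr g φ k) * f k := by
  rw [Pmeas, lintegral_withDensity_eq_lintegral_mul _ (measurable_of_countable _)
    (measurable_of_countable _)]
  exact lintegral_count _

lemma lintegral_exp_mul_Pmeas (hgpos : ∀ k : ℕ, 1 ≤ k → 0 < g k)
    (hrad : IsConvRadius g φstar) (hφ0 : 0 ≤ φ) (hφlt : ENNReal.ofReal φ < φstar) {θ : ℝ}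
    (hθ : ENNReal.ofReal (exp θ * φ) < φstar) :
    ∫⁻ k, ENNReal.ofReal (exp (θ * k)) ∂Pmeas g φ =
      ENNReal.ofReal (exp (logMGF g φ θ)) := by
  have hθφ : 0 ≤ exp θ * φ := mul_nonneg (exp_pos θ).le hφ0
  have hsumθ := hrad.1 _ hθφ hθ
  have hZ := Zfun_pos hgpos hφ0 (hrad.1 φ hφ0 hφlt)
  have hterm (k : ℕ) : ENNReal.ofReal (Pzr g φ k) * ENNReal.ofReal (exp (θ * k)) =
      ENNReal.ofReal ((exp θ * φ) ^ k / gfact g k / Zfun g φ) := by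
    rw [Pzr, ← ENNReal.ofReal_mul (div_nonneg (pow_nonneg hφ0 k)
      (mul_nonneg hZ.le (gfact_pos hgpos k).le)), mul_pow, ← exp_nat_mul, mul_comm θ]
    congr 1
    field_simp
  rw [logMGF, exp_log (div_pos (Zfun_pos hgpos hθφ hsumθ) hZ), lintegral_Pmeas]
  simp_rw [hterm]
  rw [← ENNReal.ofReal_tsum_of_nonneg (fun k => div_nonneg (div_nonneg (pow_nonneg hθφ k)
    (gfact_pos hgpos k).le) hZ.le) (hsumθ.div_const _), tsum_div_const]
  rfl

lemma isProbabilityMeasure_Pmeas (hgpos : ∀ k : ℕ, 1 ≤ k → 0 < g k)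
    (hrad : IsConvRadius g φstar) (hφ0 : 0 ≤ φ) (hφlt : ENNReal.ofReal φ < φstar) :
    IsProbabilityMeasure (Pmeas g φ) := by
  constructor
  have h := lintegral_exp_mul_Pmeas hgpos hrad hφ0 hφlt (θ := 0) (by simpa using hφlt)
  simpa [logMGF_zero hgpos hφ0 (hrad.1 φ hφ0 hφlt)] using h

noncomputable def empMean {m : ℕ} (ω : Fin m → ℕ) : ℝ := (∑ i, (ω i : ℝ)) / m

lemma empMean_nonneg {m : ℕ} (ω : Fin m → ℕ) : 0 ≤ empMean ω :=
  div_nonneg (Finset.sum_nonneg fun _ _ => Nat.cast_nonneg _) (Nat.cast_nonneg m)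

lemma natCast_mul_empMean {m : ℕ} (ω : Fin m → ℕ) :
    (m : ℝ) * empMean ω = ∑ i, (ω i : ℝ) := by
  rcases eq_or_ne m 0 with rfl | hm
  · simp [empMean]
  · rw [empMean, mul_div_cancel₀ _ (Nat.cast_ne_zero.2 hm)]

lemma lintegral_exp_mul_sum_pi (hgpos : ∀ k : ℕ, 1 ≤ k → 0 < g k)
    (hrad : IsConvRadius g φstar) (hφ0 : 0 ≤ φ) (hφlt : ENNReal.ofReal φ < φstar) {θ : ℝ}
    (hθ : ENNReal.ofReal (exp θ * φ) < φstar) (m : ℕ) :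
    ∫⁻ ω, ENNReal.ofReal (exp (θ * ∑ i, (ω i : ℝ)))
        ∂Measure.pi (fun _ : Fin m => Pmeas g φ) =
      ENNReal.ofReal (exp (m * logMGF g φ θ)) := by
  have := isProbabilityMeasure_Pmeas hgpos hrad hφ0 hφlt
  simp_rw [Finset.mul_sum, exp_sum,
    ENNReal.ofReal_prod_of_nonneg fun _ _ => (exp_pos (θ * _)).le]
  rw [lintegral_pi_prod_eq_pow (f := fun k : ℕ => ENNReal.ofReal (exp (θ * k))) _
      (measurable_of_countable _),
    lintegral_exp_mul_Pmeas hgpos hrad hφ0 hφlt hθ, Fintype.card_fin,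
    ← ENNReal.ofReal_pow (exp_pos _).le, ← exp_nat_mul]

lemma pi_le_exp_logMGF (hgpos : ∀ k : ℕ, 1 ≤ k → 0 < g k)
    (hrad : IsConvRadius g φstar) (hφ0 : 0 ≤ φ) (hφlt : ENNReal.ofReal φ < φstar) {θ : ℝ}
    (hθ : ENNReal.ofReal (exp θ * φ) < φstar) {m : ℕ} {E : Set (Fin m → ℕ)} {c : ℝ}
    (hE : ∀ ω ∈ E, θ * c ≤ θ * ∑ i, (ω i : ℝ)) :
    Measure.pi (fun _ : Fin m => Pmeas g φ) E ≤
      ENNReal.ofReal (exp (m * logMGF g φ θ - θ * c)) := by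
  have hpt (ω : Fin m → ℕ) : E.indicator 1 ω ≤
      ENNReal.ofReal (exp (-(θ * c))) * ENNReal.ofReal (exp (θ * ∑ i, (ω i : ℝ))) := by
    by_cases hω : ω ∈ E
    · rw [indicator_of_mem hω, ← ENNReal.ofReal_mul (exp_pos _).le, ← exp_add]
      exact ENNReal.one_le_ofReal.2 (one_le_exp (by linarith [hE ω hω]))
    · simp [indicator_of_notMem hω]
  calc Measure.pi (fun _ : Fin m => Pmeas g φ) E
      = ∫⁻ ω, E.indicator 1 ω ∂Measure.pi (fun _ : Fin m => Pmeas g φ) :=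
        (lintegral_indicator_one E.to_countable.measurableSet).symm
    _ ≤ _ := lintegral_mono hpt
    _ = ENNReal.ofReal (exp (m * logMGF g φ θ - θ * c)) := by
        rw [lintegral_const_mul' _ _ ENNReal.ofReal_ne_top,
          lintegral_exp_mul_sum_pi hgpos hrad hφ0 hφlt hθ, ← ENNReal.ofReal_mul (exp_pos _).le,
          ← exp_add, neg_add_eq_sub]

variable (g φstar φ) in
noncomputable def JrateOn (s : Set ℝ) (lam : ℝ) : EReal :=
  ⨆ θ ∈ s, (((θ * lam : ℝ) : EReal) - LambdaFn g φstar φ θ)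

lemma Jrate_eq_max (lam : ℝ) : Jrate g φstar φ lam =
    max (JrateOn g φstar φ (Ici 0) lam) (JrateOn g φstar φ (Iic 0) lam) := by
  rw [Jrate, JrateOn, JrateOn, max_comm]
  exact (iSup_univ.symm.trans (by rw [← Iic_union_Ici])).trans iSup_union

lemma JrateOn_nonneg (hgpos : ∀ k : ℕ, 1 ≤ k → 0 < g k) (hrad : IsConvRadius g φstar)
    (hφ0 : 0 ≤ φ) (hφlt : ENNReal.ofReal φ < φstar) {s : Set ℝ} (hs : 0 ∈ s)
    (lam : ℝ) :
    0 ≤ JrateOn g φstar φ s lam := by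
  refine le_trans (le_of_eq ?_) (le_iSup₂ (f := fun θ (_ : θ ∈ s) =>
    (((θ * lam : ℝ) : EReal) - LambdaFn g φstar φ θ)) 0 hs)
  rw [LambdaFn_of_lt (by simpa using hφlt), logMGF_zero hgpos hφ0 (hrad.1 φ hφ0 hφlt)]
  simp

lemma exists_lt_of_lt_JrateOn {s : Set ℝ} {lam c : ℝ}
    (h : (c : EReal) < JrateOn g φstar φ s lam) :
    ∃ θ ∈ s, ENNReal.ofReal (exp θ * φ) < φstar ∧ c < θ * lam - logMGF g φ θ := by
  obtain ⟨θ, hθs, h⟩ := lt_biSup_iff.1 h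
  by_cases hθ : ENNReal.ofReal (exp θ * φ) < φstar
  · rw [LambdaFn_of_lt hθ, ← EReal.coe_sub, EReal.coe_lt_coe_iff] at h
    exact ⟨θ, hθs, hθ, h⟩
  · rw [LambdaFn_of_not_lt hθ, EReal.sub_top] at h
    exact absurd h not_lt_bot

lemma lowerSemicontinuous_JrateOn (s : Set ℝ) : LowerSemicontinuous (JrateOn g φstar φ s) := by
  refine lowerSemicontinuous_iSup fun θ => lowerSemicontinuous_iSup fun _ =>
    Continuous.lowerSemicontinuous ?_
  by_cases hθ : ENNReal.ofReal (exp θ * φ) < φstar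
  · simp_rw [LambdaFn_of_lt hθ, ← EReal.coe_sub]
    exact continuous_coe_real_ereal.comp (by fun_prop)
  · simp_rw [LambdaFn_of_not_lt hθ, EReal.sub_top]
    exact continuous_const

/-- By Hölder's inequality for `Pmeas g φ`. -/
lemma convexComb_logMGF_nonneg (hgpos : ∀ k : ℕ, 1 ≤ k → 0 < g k)
    (hrad : IsConvRadius g φstar) (hφ0 : 0 ≤ φ) (hφlt : ENNReal.ofReal φ < φstar)
    {θ σ t : ℝ} (hθ : ENNReal.ofReal (exp θ * φ) < φstar)
    (hσ : ENNReal.ofReal (exp σ * φ) < φstar)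
    (ht0 : 0 ≤ t) (ht1 : t ≤ 1) (hcomb : t * θ + (1 - t) * σ = 0) :
    0 ≤ t * logMGF g φ θ + (1 - t) * logMGF g φ σ := by
  have := isProbabilityMeasure_Pmeas hgpos hrad hφ0 hφlt
  have hH := ENNReal.lintegral_mul_norm_pow_le (μ := Pmeas g φ)
    (f := fun k : ℕ => ENNReal.ofReal (exp (θ * k)))
    (g := fun k : ℕ => ENNReal.ofReal (exp (σ * k)))
    (measurable_of_countable _).aemeasurable (measurable_of_countable _).aemeasurable
    ht0 (sub_nonneg.2 ht1) (add_sub_cancel t 1)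
  have hone (k : ℕ) :
      ENNReal.ofReal (exp (θ * k)) ^ t * ENNReal.ofReal (exp (σ * k)) ^ (1 - t) = 1 := by
    rw [ENNReal.ofReal_rpow_of_pos (exp_pos _), ENNReal.ofReal_rpow_of_pos (exp_pos _),
      ← exp_mul, ← exp_mul, ← ENNReal.ofReal_mul (exp_pos _).le, ← exp_add,
      show θ * k * t + σ * k * (1 - t) = (t * θ + (1 - t) * σ) * k by ring, hcomb,
      zero_mul, exp_zero, ENNReal.ofReal_one]
  simp only [hone, lintegral_const, measure_univ, one_mul] at hH
  rw [lintegral_exp_mul_Pmeas hgpos hrad hφ0 hφlt hθ,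
    lintegral_exp_mul_Pmeas hgpos hrad hφ0 hφlt hσ,
    ENNReal.ofReal_rpow_of_pos (exp_pos _), ENNReal.ofReal_rpow_of_pos (exp_pos _),
    ← ENNReal.ofReal_mul (rpow_nonneg (exp_pos _).le _), ← exp_mul, ← exp_mul, ← exp_add,
    ENNReal.one_le_ofReal, one_le_exp_iff] at hH
  linarith

lemma not_pos_JrateOn_Ici_and_Iic (hgpos : ∀ k : ℕ, 1 ≤ k → 0 < g k)
    (hrad : IsConvRadius g φstar) (hφ0 : 0 ≤ φ) (hφlt : ENNReal.ofReal φ < φstar)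
    (lam : ℝ) :
    ¬ (0 < JrateOn g φstar φ (Ici 0) lam ∧ 0 < JrateOn g φstar φ (Iic 0) lam) := by
  rintro ⟨hpos, hneg⟩
  obtain ⟨θ, hθ0, hθ, hθlam⟩ := exists_lt_of_lt_JrateOn (c := 0) (by exact_mod_cast hpos)
  obtain ⟨σ, hσ0, hσ, hσlam⟩ := exists_lt_of_lt_JrateOn (c := 0) (by exact_mod_cast hneg)
  have hΛ0 := logMGF_zero hgpos hφ0 (hrad.1 φ hφ0 hφlt)
  have hθpos : 0 < θ := (mem_Ici.1 hθ0).lt_of_ne' (by rintro rfl; simp [hΛ0] at hθlam)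
  have hσneg : σ < 0 := (mem_Iic.1 hσ0).lt_of_ne (by rintro rfl; simp [hΛ0] at hσlam)
  have hθσ : 0 < θ - σ := by linarith
  have hconv := convexComb_logMGF_nonneg hgpos hrad hφ0 hφlt hθ hσ (t := -σ / (θ - σ))
    (div_nonneg (neg_nonneg.2 hσneg.le) hθσ.le) ((div_le_one hθσ).2 (by linarith))
    (by field_simp; ring)
  have hweights :
      (θ - σ) * (-σ / (θ - σ) * logMGF g φ θ + (1 - -σ / (θ - σ)) * logMGF g φ σ) =
        -σ * logMGF g φ θ + θ * logMGF g φ σ := by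
    field_simp
    ring
  linarith [mul_nonneg hθσ.le hconv, mul_pos (neg_pos.2 hσneg) hθlam, mul_pos hθpos hσlam]

lemma exists_Jrate_le (hgpos : ∀ k : ℕ, 1 ≤ k → 0 < g k) (hrad : IsConvRadius g φstar)
    (hφ0 : 0 ≤ φ) (hφlt : ENNReal.ofReal φ < φstar) {a b : ℝ} (hab : a ≤ b) :
    ∃ lam ∈ Icc a b, Jrate g φstar φ lam ≤
      max (JrateOn g φstar φ (Ici 0) a) (JrateOn g φstar φ (Iic 0) b) := by
  set μ := max (JrateOn g φstar φ (Ici 0) a) (JrateOn g φstar φ (Iic 0) b)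
  by_contra! h
  simp_rw [Jrate_eq_max, lt_max_iff] at h
  have ha := left_mem_Icc.2 hab
  have hb := right_mem_Icc.2 hab
  have hμ : 0 ≤ μ :=
    (JrateOn_nonneg hgpos hrad hφ0 hφlt self_mem_Ici a).trans (le_max_left _ _)
  obtain ⟨lam, -, hneg, hpos⟩ := isPreconnected_Icc _ _
    ((lowerSemicontinuous_JrateOn (Iic 0)).isOpen_preimage μ)
    ((lowerSemicontinuous_JrateOn (Ici 0)).isOpen_preimage μ)
    (fun lam hlam => (h lam hlam).symm)
    ⟨a, ha, (h a ha).resolve_left (le_max_left _ _).not_gt⟩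
    ⟨b, hb, (h b hb).resolve_right (le_max_right _ _).not_gt⟩
  exact not_pos_JrateOn_Ici_and_Iic hgpos hrad hφ0 hφlt lam
    ⟨hμ.trans_lt hpos, hμ.trans_lt hneg⟩

lemma pi_le_exp_of_lt_JrateOn (hgpos : ∀ k : ℕ, 1 ≤ k → 0 < g k)
    (hrad : IsConvRadius g φstar) (hφ0 : 0 ≤ φ) (hφlt : ENNReal.ofReal φ < φstar)
    {s : Set ℝ} {m : ℕ} {E : Set (Fin m → ℕ)} {lam c : ℝ}
    (hE : ∀ θ ∈ s, ∀ ω ∈ E, θ * (m * lam) ≤ θ * ∑ i, (ω i : ℝ))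
    (hc : (c : EReal) < JrateOn g φstar φ s lam) :
    Measure.pi (fun _ : Fin m => Pmeas g φ) E ≤ ENNReal.ofReal (exp (-(m * c))) := by
  obtain ⟨θ, hθs, hθ, hlt⟩ := exists_lt_of_lt_JrateOn hc
  refine (pi_le_exp_logMGF hgpos hrad hφ0 hφlt hθ (hE θ hθs)).trans
    (ENNReal.ofReal_le_ofReal (exp_le_exp.2 ?_))
  nlinarith [mul_le_mul_of_nonneg_left hlt.le (Nat.cast_nonneg (α := ℝ) m)]

lemma pi_empMean_mem_Icc_le (hgpos : ∀ k : ℕ, 1 ≤ k → 0 < g k)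
    (hrad : IsConvRadius g φstar) (hφ0 : 0 ≤ φ) (hφlt : ENNReal.ofReal φ < φstar)
    {a b c : ℝ} (hab : a ≤ b) (hc : (c : EReal) < ⨅ lam ∈ Icc a b, Jrate g φstar φ lam)
    (m : ℕ) :
    Measure.pi (fun _ : Fin m => Pmeas g φ) {ω | empMean ω ∈ Icc a b} ≤
      ENNReal.ofReal (exp (-(m * c))) := by
  obtain ⟨lam, hlam, hJ⟩ := exists_Jrate_le hgpos hrad hφ0 hφlt hab
  rcases lt_max_iff.1 (hc.trans_le ((biInf_le _ hlam).trans hJ)) with h | h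
  · refine pi_le_exp_of_lt_JrateOn hgpos hrad hφ0 hφlt (fun θ hθ ω hω => ?_) h
    rw [← natCast_mul_empMean]
    exact mul_le_mul_of_nonneg_left
      (mul_le_mul_of_nonneg_left hω.1 (Nat.cast_nonneg m)) (mem_Ici.1 hθ)
  · refine pi_le_exp_of_lt_JrateOn hgpos hrad hφ0 hφlt (fun θ hθ ω hω => ?_) h
    rw [← natCast_mul_empMean]
    exact mul_le_mul_of_nonpos_left
      (mul_le_mul_of_nonneg_left hω.2 (Nat.cast_nonneg m)) (mem_Iic.1 hθ)

lemma setLIntegral_empMean_Icc_le (hgpos : ∀ k : ℕ, 1 ≤ k → 0 < g k)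
    (hrad : IsConvRadius g φstar) (hφ0 : 0 ≤ φ) (hφlt : ENNReal.ofReal φ < φstar)
    {G : ℝ → ℝ} {a b r ε : ℝ} (hab : a ≤ b) (hε : 0 < ε)
    (hGJ : ∀ lam ∈ Icc a b, ((G lam - r : ℝ) : EReal) ≤ Jrate g φstar φ lam)
    (hosc : ∀ x ∈ Icc a b, |G x - G a| ≤ ε) (m : ℕ) :
    ∫⁻ ω in {ω | empMean ω ∈ Icc a b}, ENNReal.ofReal (exp (m * G (empMean ω)))
        ∂Measure.pi (fun _ : Fin m => Pmeas g φ) ≤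
      ENNReal.ofReal (exp (m * (r + 3 * ε))) := by
  have hinf : ((G a - ε - r : ℝ) : EReal) ≤ ⨅ lam ∈ Icc a b, Jrate g φstar φ lam :=
    le_iInf₂ fun lam hlam => (EReal.coe_le_coe_iff.2
      (by linarith [(abs_le.1 (hosc lam hlam)).1])).trans (hGJ lam hlam)
  have hmeas := pi_empMean_mem_Icc_le hgpos hrad hφ0 hφlt hab
    ((EReal.coe_lt_coe_iff.2 (sub_lt_self _ hε)).trans_le hinf) m
  calc ∫⁻ ω in {ω | empMean ω ∈ Icc a b}, ENNReal.ofReal (exp (m * G (empMean ω)))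
        ∂Measure.pi (fun _ : Fin m => Pmeas g φ)
      ≤ ∫⁻ _ in {ω | empMean ω ∈ Icc a b}, ENNReal.ofReal (exp (m * (G a + ε)))
        ∂Measure.pi (fun _ : Fin m => Pmeas g φ) :=
        setLIntegral_mono measurable_const fun ω hω => ENNReal.ofReal_le_ofReal
          (exp_le_exp.2 (mul_le_mul_of_nonneg_left (by linarith [(abs_le.1 (hosc _ hω)).2])
            (Nat.cast_nonneg m)))
    _ ≤ ENNReal.ofReal (exp (m * (G a + ε))) *
          ENNReal.ofReal (exp (-(m * (G a - ε - r - ε)))) := by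
        rw [setLIntegral_const]
        gcongr
    _ = ENNReal.ofReal (exp (m * (r + 3 * ε))) := by
        rw [← ENNReal.ofReal_mul (exp_pos _).le, ← exp_add]
        ring_nf

lemma setLIntegral_empMean_Ici_le (hgpos : ∀ k : ℕ, 1 ≤ k → 0 < g k)
    (hrad : IsConvRadius g φstar) (hφ0 : 0 ≤ φ) (hφlt : ENNReal.ofReal φ < φstar)
    {G : ℝ → ℝ} {C₁ C₂ : ℝ} (hG : ∀ x, 0 ≤ x → G x ≤ C₁ + C₂ * x) {θ : ℝ}
    (hθ : ENNReal.ofReal (exp θ * φ) < φstar) (hC₂θ : C₂ ≤ θ) (L : ℝ) (m : ℕ) :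
    ∫⁻ ω in {ω | L ≤ empMean ω}, ENNReal.ofReal (exp (m * G (empMean ω)))
        ∂Measure.pi (fun _ : Fin m => Pmeas g φ) ≤
      ENNReal.ofReal (exp (m * (C₁ - (θ - C₂) * L + logMGF g φ θ))) := by
  have hpt (ω : Fin m → ℕ) (hω : L ≤ empMean ω) :
      ENNReal.ofReal (exp (m * G (empMean ω))) ≤
        ENNReal.ofReal (exp (m * (C₁ - (θ - C₂) * L))) *
          ENNReal.ofReal (exp (θ * ∑ i, (ω i : ℝ))) := by
    rw [← ENNReal.ofReal_mul (exp_pos _).le, ← exp_add, ← natCast_mul_empMean]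
    refine ENNReal.ofReal_le_ofReal (exp_le_exp.2 ?_)
    have hm := Nat.cast_nonneg (α := ℝ) m
    nlinarith [mul_le_mul_of_nonneg_left (hG _ (empMean_nonneg ω)) hm,
      mul_nonneg hm (mul_nonneg (sub_nonneg.2 hC₂θ) (sub_nonneg.2 hω))]
  calc ∫⁻ ω in {ω | L ≤ empMean ω}, ENNReal.ofReal (exp (m * G (empMean ω)))
        ∂Measure.pi (fun _ : Fin m => Pmeas g φ)
      ≤ ∫⁻ ω, ENNReal.ofReal (exp (m * (C₁ - (θ - C₂) * L))) *
          ENNReal.ofReal (exp (θ * ∑ i, (ω i : ℝ)))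
          ∂Measure.pi (fun _ : Fin m => Pmeas g φ) :=
        (setLIntegral_mono (measurable_of_countable _) hpt).trans (setLIntegral_le_lintegral _ _)
    _ = ENNReal.ofReal (exp (m * (C₁ - (θ - C₂) * L + logMGF g φ θ))) := by
        rw [lintegral_const_mul' _ _ ENNReal.ofReal_ne_top,
          lintegral_exp_mul_sum_pi hgpos hrad hφ0 hφlt hθ, ← ENNReal.ofReal_mul (exp_pos _).le,
          ← exp_add, mul_add]

lemma exists_lintegral_exp_empMean_le (hgpos : ∀ k : ℕ, 1 ≤ k → 0 < g k)
    (hrad : IsConvRadius g φstar) (hφ0 : 0 ≤ φ) (hφlt : ENNReal.ofReal φ < φstar)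
    {G : ℝ → ℝ} (hGc : Continuous G) {C₁ C₂ : ℝ}
    (hG : ∀ x, 0 ≤ x → G x ≤ C₁ + C₂ * x) {θ : ℝ}
    (hθ : ENNReal.ofReal (exp θ * φ) < φstar) (hC₂θ : C₂ < θ) {r : ℝ}
    (hGJ : ∀ lam, 0 ≤ lam → ((G lam - r : ℝ) : EReal) ≤ Jrate g φstar φ lam)
    {ε : ℝ} (hε : 0 < ε) :
    ∃ N : ℕ, ∀ m : ℕ, ∫⁻ ω, ENNReal.ofReal (exp (m * G (empMean ω)))
        ∂Measure.pi (fun _ : Fin m => Pmeas g φ) ≤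
      ENNReal.ofReal ((N + 1) * exp (m * (r + 3 * ε))) := by
  obtain ⟨δ, hδ, N, hLN, hosc⟩ :=
    exists_grid_abs_sub_le hGc ((C₁ + logMGF g φ θ - r - ε) / (θ - C₂)) hε
  have htail : C₁ - (θ - C₂) * (N * δ) + logMGF g φ θ ≤ r + 3 * ε := by
    have := mul_le_mul_of_nonneg_left hLN (sub_pos.2 hC₂θ).le
    rw [mul_div_cancel₀ _ (sub_pos.2 hC₂θ).ne'] at this
    linarith
  refine ⟨N, fun m => ?_⟩
  have hm := Nat.cast_nonneg (α := ℝ) m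
  calc _ ≤ _ := lintegral_le_sum_setLIntegral_Icc_add _ empMean_nonneg _ hδ N
    _ ≤ ∑ _j : Fin N, ENNReal.ofReal (exp (m * (r + 3 * ε))) +
          ENNReal.ofReal (exp (m * (r + 3 * ε))) := by
        gcongr with j
        · have hj0 : 0 ≤ (j : ℝ) * δ := by positivity
          exact setLIntegral_empMean_Icc_le hgpos hrad hφ0 hφlt (by nlinarith) hε
            (fun lam hlam => hGJ lam (hj0.trans hlam.1)) (hosc j j.2) m
        · exact (setLIntegral_empMean_Ici_le hgpos hrad hφ0 hφlt hG hθ hC₂θ.le _ m).trans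
            (ENNReal.ofReal_le_ofReal (exp_le_exp.2 (mul_le_mul_of_nonneg_left htail hm)))
    _ = ENNReal.ofReal ((N + 1) * exp (m * (r + 3 * ε))) := by
        rw [Finset.sum_const, Finset.card_univ, Fintype.card_fin, nsmul_eq_mul,
          ENNReal.ofReal_mul (by positivity), ENNReal.ofReal_add (by positivity) zero_le_one,
          ENNReal.ofReal_natCast, ENNReal.ofReal_one, add_mul, one_mul]

end ZeroRange

theorem stmt15_general (g : ℕ → ℝ)
    (hgpos : ∀ k : ℕ, 1 ≤ k → 0 < g k)
    (φstar : ℝ≥0∞) (hrad : IsConvRadius g φstar)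
    (φ : ℝ) (hφ0 : 0 < φ) (hφlt : ENNReal.ofReal φ < φstar)
    (G : ℝ → ℝ) (hGcont : Continuous G)
    (C₁ C₂ : ℝ) (hC₂ : 0 ≤ C₂)
    (hG : ∀ lam : ℝ, 0 ≤ lam → |G lam| ≤ C₁ + C₂ * lam)
    (hq : ∃ q : ℝ, 1 < q ∧ ENNReal.ofReal (Real.exp (q * C₂) * φ) < φstar) :
    Filter.limsup
      (fun m : ℕ =>
        (((1 / m : ℝ) * Real.log
          (∫ ω : Fin m → ℕ,
            Real.exp (m * G ((∑ i : Fin m, (ω i : ℝ)) / m))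
              ∂Measure.pi fun _ : Fin m => Pmeas g φ) : ℝ) : EReal))
      Filter.atTop ≤
    ⨆ lam ∈ Set.Ici (0 : ℝ), (((G lam : ℝ) : EReal) - Jrate g φstar φ lam) := by
  have := isProbabilityMeasure_Pmeas hgpos hrad hφ0.le hφlt
  obtain ⟨q, hq1, hqφ⟩ := hq
  obtain ⟨θ, hqθ, hθ⟩ := exists_gt_ofReal_exp_mul_lt hqφ
  refine le_of_forall_gt_imp_ge_of_dense fun c hc => ?_
  obtain ⟨r, hRr, hrc⟩ := EReal.lt_iff_exists_real_btwn.1 hc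
  obtain ⟨r', hrr', hr'c⟩ := EReal.lt_iff_exists_real_btwn.1 hrc
  have hGJ (lam : ℝ) (hlam : 0 ≤ lam) : ((G lam - r : ℝ) : EReal) ≤ Jrate g φstar φ lam :=
    EReal.sub_le_of_le_add' <| (EReal.sub_le_iff_le_add (.inr (EReal.coe_ne_top r))
      (.inr (EReal.coe_ne_bot r))).1 <| (le_iSup₂ (f := fun lam (_ : lam ∈ Ici (0 : ℝ)) =>
        ((G lam : ℝ) : EReal) - Jrate g φstar φ lam) lam hlam).trans hRr.le
  have hε : 0 < (r' - r) / 3 := by linarith [EReal.coe_lt_coe_iff.1 hrr']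
  obtain ⟨N, hN⟩ := exists_lintegral_exp_empMean_le hgpos hrad hφ0.le hφlt hGcont
    (fun x hx => (le_abs_self _).trans (hG x hx)) hθ (by nlinarith) hGJ hε
  refine (limsup_inv_mul_le (K := Real.log (N + 1)) (c := r + 3 * ((r' - r) / 3))
    fun m => ?_).trans ?_
  · refine (log_integral_exp_le (measurable_of_countable _).aestronglyMeasurable
      (by positivity) (hN m)).trans_eq ?_
    rw [log_mul (by positivity) (exp_pos _).ne', log_exp]
  · rw [show r + 3 * ((r' - r) / 3) = r' by ring]
    exact hr'c.le

/-- Laplace–Varadhan upper bound for the empirical mean under `(P_φ)^{⊗m}`: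
for continuous `G` with `|G(λ)| ≤ C₁ + C₂ λ` (and `e^{q C₂} φ < φ*` for some
`q > 1`), `limsup_m (1/m) log ∫ exp(m G((ω₁+⋯+ω_m)/m)) d(P_φ)^{⊗m} ≤
sup_{λ ≥ 0} (G(λ) − J(λ))`. -/
theorem stmt15 (g : ℕ → ℝ) (hmono : Monotone g) (hg0 : g 0 = 0)
    (hgpos : ∀ k : ℕ, 1 ≤ k → 0 < g k)
    (φstar : ℝ≥0∞) (hφstar : 0 < φstar) (hrad : IsConvRadius g φstar)
    (φ : ℝ) (hφ0 : 0 < φ) (hφlt : ENNReal.ofReal φ < φstar)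
    (G : ℝ → ℝ) (hGcont : Continuous G)
    (C₁ C₂ : ℝ) (hC₁ : 0 ≤ C₁) (hC₂ : 0 ≤ C₂)
    (hG : ∀ lam : ℝ, 0 ≤ lam → |G lam| ≤ C₁ + C₂ * lam)
    (hq : ∃ q : ℝ, 1 < q ∧ ENNReal.ofReal (Real.exp (q * C₂) * φ) < φstar) :
    Filter.limsup
      (fun m : ℕ =>
        (((1 / m : ℝ) * Real.log
          (∫ ω : Fin m → ℕ,
            Real.exp (m * G ((∑ i : Fin m, (ω i : ℝ)) / m))
              ∂Measure.pi fun _ : Fin m => Pmeas g φ) : ℝ) : EReal))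
      Filter.atTop ≤
    ⨆ lam ∈ Set.Ici (0 : ℝ), (((G lam : ℝ) : EReal) - Jrate g φstar φ lam) :=
  stmt15_general g hgpos φstar hrad φ hφ0 hφlt G hGcont C₁ C₂ hC₂ hG hq
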